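/- arXiv:2409.15647 — 3 statements merged into one kernel-verified Lean document; each statement's English description precedes it below -/
import Mathlib

section
/- Define step (a, b) = (Nat.xor a b, 2 * Nat.land a b). For all natural numbers a and b with a < 2^n and b < 2^n, iterating step at most n + 1 times starting from (a, b) yields a pair whose second component is 0, and whose first component equals a + b. -/
/-!
One step of `addStep` keeps the sum of the pair unchanged (xor is addition without carries,
`2 * (a &&& b)` is the carry vector), and it doubles the 2-adic divisibility of the carry:
after `k` steps the carry is divisible by `2 ^ k`. Since the carry never exceeds `a + b < 2 ^ (n + 1)`,
it vanishes after `n + 1` steps, and the first component is then the whole sum.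
-/

def addStep (p : ℕ × ℕ) : ℕ × ℕ := (p.1 ^^^ p.2, 2 * (p.1 &&& p.2))

theorem Nat.xor_add_two_mul_and (a b : ℕ) : (a ^^^ b) + 2 * (a &&& b) = a + b := by
  induction a using Nat.binaryRec generalizing b with
  | zero => simp
  | bit x m ih =>
    induction b using Nat.binaryRec with
    | zero => simp
    | bit y n _ =>
      rw [Nat.xor_bit, Nat.land_bit]
      have h := ih n
      simp only [Nat.bit_val] at *
      cases x <;> cases y <;> simp <;> omega

theorem Nat.two_pow_dvd_and_of_dvd_right {k b : ℕ} (a : ℕ) (h : 2 ^ k ∣ b) :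
    2 ^ k ∣ a &&& b := by
  rw [Nat.dvd_iff_mod_eq_zero] at h ⊢
  rw [Nat.and_mod_two_pow, h, Nat.and_zero]

theorem addStep_fst_add_snd (p : ℕ × ℕ) : (addStep p).1 + (addStep p).2 = p.1 + p.2 :=
  Nat.xor_add_two_mul_and p.1 p.2

theorem iterate_addStep_fst_add_snd (k : ℕ) (p : ℕ × ℕ) :
    (addStep^[k] p).1 + (addStep^[k] p).2 = p.1 + p.2 := by
  induction k with
  | zero => rfl
  | succ k ih => rw [Function.iterate_succ_apply', addStep_fst_add_snd, ih]

theorem two_pow_succ_dvd_addStep_snd {k : ℕ} {p : ℕ × ℕ} (h : 2 ^ k ∣ p.2) :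
    2 ^ (k + 1) ∣ (addStep p).2 := by
  rw [pow_succ']
  exact Nat.mul_dvd_mul_left 2 (Nat.two_pow_dvd_and_of_dvd_right p.1 h)

theorem two_pow_dvd_iterate_addStep_snd (k : ℕ) (p : ℕ × ℕ) : 2 ^ k ∣ (addStep^[k] p).2 := by
  induction k with
  | zero => exact one_dvd _
  | succ k ih =>
    rw [Function.iterate_succ_apply']
    exact two_pow_succ_dvd_addStep_snd ih

theorem addStep_terminates (n a b : ℕ) (ha : a < 2 ^ n) (hb : b < 2 ^ n) :
    ∃ k ≤ n + 1, (addStep^[k] (a, b)).2 = 0 ∧ (addStep^[k] (a, b)).1 = a + b := by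
  have hsum := iterate_addStep_fst_add_snd (n + 1) (a, b)
  have hlt : (addStep^[n + 1] (a, b)).2 < 2 ^ (n + 1) := by
    rw [pow_succ]
    dsimp only at hsum
    omega
  have hcarry : (addStep^[n + 1] (a, b)).2 = 0 :=
    Nat.eq_zero_of_dvd_of_lt (two_pow_dvd_iterate_addStep_snd (n + 1) (a, b)) hlt
  exact ⟨n + 1, le_rfl, hcarry, by omega⟩
end

section
/- Define step (a, b) = (Nat.xor a b, 2 * Nat.land a b). If the second component of step^[k] (a, b) is 0, then the first component of step^[k] (a, b) equals a + b. -/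
theorem addStep_partial_correct (a b k : ℕ) (h : (addStep^[k] (a, b)).2 = 0) :
    (addStep^[k] (a, b)).1 = a + b := by
  simpa [h] using iterate_addStep_fst_add_snd k (a, b)
end

section
/- With shiftRight xs = default :: xs.dropLast acting on lists of length 2n (a query of length n padded with n default tokens), iterating shiftRight exactly n times maps the list xs ++ pad (with xs of length n and pad of length n consisting of default elements) to pad ++ xs. -/
/-! Each shift moves one default token to the front and drops the last entry, so `k` shifts
consume any suffix of length `k` while the prefix is carried along unchanged. -/

def shiftRight {α : Type*} [Inhabited α] (xs : List α) : List α :=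
  default :: xs.dropLast

section

variable {α : Type*} [Inhabited α]

theorem shiftRight_append_of_ne_nil (l : List α) {r : List α} (hr : r ≠ []) :
    shiftRight (l ++ r) = (default :: l) ++ r.dropLast := by
  rw [shiftRight, List.dropLast_append_of_ne_nil hr, List.cons_append]

theorem shiftRight_iterate_append (k : ℕ) (l : List α) {r : List α} (hr : r.length = k) :
    shiftRight^[k] (l ++ r) = List.replicate k default ++ l := by
  induction k generalizing l r with
  | zero => simp [List.length_eq_zero_iff.mp hr]
  | succ k ih =>
    have hr_ne : r ≠ [] := List.ne_nil_of_length_pos (by omega)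
    rw [Function.iterate_succ_apply, shiftRight_append_of_ne_nil l hr_ne,
      ih _ (by simp [hr]), List.replicate_succ', List.append_assoc, List.singleton_append]

end

theorem shiftRight_iterate_copy_general {α : Type*} [Inhabited α] (n : ℕ) (xs : List α) :
    shiftRight^[n] (xs ++ List.replicate n (default : α)) =
      List.replicate n (default : α) ++ xs :=
  shiftRight_iterate_append n xs List.length_replicate

theorem shiftRight_iterate_copy {α : Type*} [Inhabited α] (n : ℕ) (xs : List α)
    (hlen : xs.length = n) :
    shiftRight^[n] (xs ++ List.replicate n (default : α)) =
      List.replicate n (default : α) ++ xs :=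
  shiftRight_iterate_copy_general n xs
end
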